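/- arXiv:1804.06187 — 2 statements merged into one kernel-verified Lean document; each statement's English description precedes it below -/
import Mathlib

section
/- Fréchet–Hoeffding bounds for the conjunction of two conditional events: for events A, H, B, K with P(H) > 0 and P(K) > 0, the prevision z of the conjunction ⟦(A|H)∧(B|K)⟧ satisfies max(P(A|H) + P(B|K) − 1, 0) ≤ z ≤ min(P(A|H), P(B|K)). -/
open MeasureTheory Set
open scoped Classical

noncomputable section

variable {Ω : Type*} [MeasurableSpace Ω]

/-- Indicator (with values in `ℝ`) of a set. -/
def ind (A : Set Ω) : Ω → ℝ := A.indicator 1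

/-- Conditional probability `P(A|H) = P(A ∩ H)/P(H)`. -/
def condProb (P : Measure Ω) (A H : Set Ω) : ℝ :=
  (P (A ∩ H)).toReal / (P H).toReal

/-- The (indicator of the) conditional event `A|H`,
`⟦A|H⟧ = 1_{A∩H} + P(A|H)·1_{Hᶜ}`. -/
def condEvent (P : Measure Ω) (A H : Set Ω) : Ω → ℝ :=
  fun ω => ind (A ∩ H) ω + condProb P A H * ind Hᶜ ω

/-- The prevision `z` of the conjunction `(A|H) ∧ (B|K)`:
`z = E[min(⟦A|H⟧, ⟦B|K⟧)·1_{H∪K}]/P(H∪K)`. -/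
def conjPrev (P : Measure Ω) (A H B K : Set Ω) : ℝ :=
  (∫ ω, min (condEvent P A H ω) (condEvent P B K ω) * ind (H ∪ K) ω ∂P) /
    (P (H ∪ K)).toReal

/-- The conjunction `⟦(A|H) ∧ (B|K)⟧ = min(⟦A|H⟧, ⟦B|K⟧)·1_{H∪K} + z·1_{(H∪K)ᶜ}`. -/
def conjCE (P : Measure Ω) (A H B K : Set Ω) : Ω → ℝ :=
  fun ω => min (condEvent P A H ω) (condEvent P B K ω) * ind (H ∪ K) ω
    + conjPrev P A H B K * ind (H ∪ K)ᶜ ω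

/-- The iterated conditional `⟦(B|K)|(A|H)⟧ = ⟦(A|H)∧(B|K)⟧ + μ·(1 − ⟦A|H⟧)`,
with `μ = z / P(A|H)`. -/
def iterCond (P : Measure Ω) (A H B K : Set Ω) : Ω → ℝ :=
  fun ω => conjCE P A H B K ω +
    (conjPrev P A H B K / condProb P A H) * (1 - condEvent P A H ω)

/-- Goodman–Nguyen logical implication between conditional events:
`A|H ⊑ B|K` iff `A∩H ⊆ B∩K` and `Bᶜ∩K ⊆ Aᶜ∩H`. -/
def GNle (A H B K : Set Ω) : Prop := A ∩ H ⊆ B ∩ K ∧ Bᶜ ∩ K ⊆ Aᶜ ∩ H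

/-!
Conditioning on `H ∪ K`, the prevision `z` becomes the expectation of `min(⟦A|H⟧, ⟦B|K⟧)` under
the probability `P(·|H ∪ K)`. Since `H ⊆ H ∪ K`, conditioning does not change `P(A|H)`, so
`⟦A|H⟧` still has expectation `P(A|H)` under it, and likewise for `B|K`. The bounds are then the
pointwise inequalities `max(x + y - 1, 0) ≤ min(x, y) ≤ x, y` on `[0, 1]`, integrated.
-/

open ProbabilityTheory

lemma ind_nonneg {α : Type*} (A : Set α) (a : α) : 0 ≤ ind A a :=
  indicator_nonneg (fun _ _ => zero_le_one) a

lemma ind_le_one {α : Type*} (A : Set α) (a : α) : ind A a ≤ 1 :=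
  indicator_le_self' (fun _ _ => zero_le_one) a

lemma measurable_ind {A : Set Ω} (hA : MeasurableSet A) : Measurable (ind A) :=
  measurable_one.indicator hA

lemma integral_ind (μ : Measure Ω) {A : Set Ω} (hA : MeasurableSet A) :
    ∫ ω, ind A ω ∂μ = μ.real A :=
  integral_indicator_one hA

lemma integral_mul_ind_div_eq_integral_cond (P : Measure Ω) {S : Set Ω}
    (hS : MeasurableSet S) (f : Ω → ℝ) :
    (∫ ω, f ω * ind S ω ∂P) / (P S).toReal = ∫ ω, f ω ∂P[|S] := by
  have hf : (fun ω => f ω * ind S ω) = S.indicator f := by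
    ext ω; simp [ind, indicator_apply]
  rw [hf, integral_indicator hS, ProbabilityTheory.cond, integral_smul_measure,
    ENNReal.toReal_inv, smul_eq_mul, div_eq_inv_mul]

lemma condProb_nonneg (P : Measure Ω) (A H : Set Ω) : 0 ≤ condProb P A H := by
  unfold condProb; positivity

lemma condProb_le_one (P : Measure Ω) [IsFiniteMeasure P] (A H : Set Ω) :
    condProb P A H ≤ 1 :=
  div_le_one_of_le₀ (measureReal_mono inter_subset_right) ENNReal.toReal_nonneg

lemma condProb_mul_measureReal (μ : Measure Ω) [IsFiniteMeasure μ] (A H : Set Ω) :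
    condProb μ A H * μ.real H = μ.real (A ∩ H) := by
  rcases eq_or_ne (μ.real H) 0 with h | h
  · rw [h, mul_zero, eq_comm]
    exact le_antisymm (h ▸ measureReal_mono inter_subset_right) measureReal_nonneg
  · exact div_mul_cancel₀ _ h

lemma condProb_cond_of_subset (P : Measure Ω) [IsFiniteMeasure P] {A H S : Set Ω}
    (hS : MeasurableSet S) (hS0 : P S ≠ 0) (hHS : H ⊆ S) :
    condProb P[|S] A H = condProb P A H := by
  have hc : (P S)⁻¹.toReal ≠ 0 := by
    simp [ENNReal.toReal_eq_zero_iff, hS0, measure_ne_top]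
  simp only [condProb, cond_apply hS, ENNReal.toReal_mul, inter_eq_right.mpr hHS,
    inter_eq_right.mpr (inter_subset_right.trans hHS), mul_div_mul_left _ _ hc]

lemma condEvent_mem_Icc (P : Measure Ω) [IsFiniteMeasure P] (A H : Set Ω) (ω : Ω) :
    condEvent P A H ω ∈ Icc 0 1 := by
  refine ⟨add_nonneg (ind_nonneg _ _) (mul_nonneg (condProb_nonneg _ _ _) (ind_nonneg _ _)), ?_⟩
  by_cases h : ω ∈ H
  · simpa [condEvent, ind, h] using ind_le_one (A ∩ H) ω
  · simpa [condEvent, ind, h] using condProb_le_one P A H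

lemma measurable_condEvent (P : Measure Ω) {A H : Set Ω} (hA : MeasurableSet A)
    (hH : MeasurableSet H) : Measurable (condEvent P A H) :=
  (measurable_ind (hA.inter hH)).add ((measurable_ind hH.compl).const_mul _)

lemma integrable_condEvent (P μ : Measure Ω) [IsFiniteMeasure P] [IsFiniteMeasure μ]
    {A H : Set Ω} (hA : MeasurableSet A) (hH : MeasurableSet H) :
    Integrable (condEvent P A H) μ :=
  .of_bound (measurable_condEvent P hA hH).aestronglyMeasurable 1 <| .of_forall fun ω => by
    rw [Real.norm_of_nonneg (condEvent_mem_Icc P A H ω).1]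
    exact (condEvent_mem_Icc P A H ω).2

lemma integral_condEvent (μ : Measure Ω) [IsProbabilityMeasure μ] {A H : Set Ω}
    (hA : MeasurableSet A) (hH : MeasurableSet H) :
    ∫ ω, condEvent μ A H ω ∂μ = condProb μ A H := by
  simp only [condEvent]
  rw [integral_add, integral_const_mul, integral_ind μ (hA.inter hH),
    integral_ind μ hH.compl, probReal_compl_eq_one_sub hH, ← condProb_mul_measureReal]
  · ring
  · exact (integrable_const 1).indicator (hA.inter hH)
  · exact ((integrable_const 1).indicator hH.compl).const_mul _

lemma integral_condEvent_cond_of_subset (P : Measure Ω) [IsFiniteMeasure P] {A H S : Set Ω}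
    (hA : MeasurableSet A) (hH : MeasurableSet H) (hS : MeasurableSet S) (hS0 : P S ≠ 0)
    (hHS : H ⊆ S) : ∫ ω, condEvent P A H ω ∂P[|S] = condProb P A H := by
  have : IsProbabilityMeasure P[|S] := cond_isProbabilityMeasure hS0
  have hE : condEvent P[|S] A H = condEvent P A H := by
    ext ω; simp only [condEvent, condProb_cond_of_subset P hS hS0 hHS]
  rw [← hE, integral_condEvent _ hA hH, condProb_cond_of_subset P hS hS0 hHS]

lemma integral_min_le_min_integral (μ : Measure Ω) {f g : Ω → ℝ} (hf : Integrable f μ)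
    (hg : Integrable g μ) :
    ∫ ω, min (f ω) (g ω) ∂μ ≤ min (∫ ω, f ω ∂μ) (∫ ω, g ω ∂μ) :=
  le_min (integral_mono (hf.inf hg) hf fun _ => min_le_left _ _)
    (integral_mono (hf.inf hg) hg fun _ => min_le_right _ _)

lemma max_integral_add_sub_one_le_integral_min (μ : Measure Ω) [IsProbabilityMeasure μ]
    {f g : Ω → ℝ} (hf : Integrable f μ) (hg : Integrable g μ)
    (hf01 : ∀ᵐ ω ∂μ, f ω ∈ Icc 0 1) (hg01 : ∀ᵐ ω ∂μ, g ω ∈ Icc 0 1) :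
    max (∫ ω, f ω ∂μ + ∫ ω, g ω ∂μ - 1) 0 ≤ ∫ ω, min (f ω) (g ω) ∂μ := by
  refine max_le ?_ (integral_nonneg_of_ae ?_)
  · calc ∫ ω, f ω ∂μ + ∫ ω, g ω ∂μ - 1 = ∫ ω, (f ω + g ω - 1) ∂μ := by
          rw [integral_sub (f := fun ω => f ω + g ω) (hf.add hg) (integrable_const 1),
            integral_add hf hg, integral_const, probReal_univ, one_smul]
      _ ≤ ∫ ω, min (f ω) (g ω) ∂μ := by
          refine integral_mono_ae ((hf.add hg).sub (integrable_const 1)) (hf.inf hg) ?_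
          filter_upwards [hf01, hg01] with ω hfω hgω
          exact le_min (by linarith [hgω.2]) (by linarith [hfω.2])
  · filter_upwards [hf01, hg01] with ω hfω hgω
    exact le_min hfω.1 hgω.1

lemma conjPrev_eq_integral_cond (P : Measure Ω) {A H B K : Set Ω} (hH : MeasurableSet H)
    (hK : MeasurableSet K) :
    conjPrev P A H B K = ∫ ω, min (condEvent P A H ω) (condEvent P B K ω) ∂P[|H ∪ K] :=
  integral_mul_ind_div_eq_integral_cond P (hH.union hK) _

theorem frechet_hoeffding_bounds_general (P : Measure Ω) [IsProbabilityMeasure P]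
    (A H B K : Set Ω)
    (hAm : MeasurableSet A) (hHm : MeasurableSet H)
    (hBm : MeasurableSet B) (hKm : MeasurableSet K)
    (hH : 0 < P H) :
    max (condProb P A H + condProb P B K - 1) 0 ≤ conjPrev P A H B K ∧
      conjPrev P A H B K ≤ min (condProb P A H) (condProb P B K) := by
  have hS0 : P (H ∪ K) ≠ 0 := (hH.trans_le (measure_mono subset_union_left)).ne'
  have : IsProbabilityMeasure P[|H ∪ K] := cond_isProbabilityMeasure hS0
  have hX := integrable_condEvent P P[|H ∪ K] hAm hHm
  have hY := integrable_condEvent P P[|H ∪ K] hBm hKm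
  have hX01 := ae_of_all P[|H ∪ K] (condEvent_mem_Icc P A H)
  have hY01 := ae_of_all P[|H ∪ K] (condEvent_mem_Icc P B K)
  rw [conjPrev_eq_integral_cond P hHm hKm,
    ← integral_condEvent_cond_of_subset P hAm hHm (hHm.union hKm) hS0 subset_union_left,
    ← integral_condEvent_cond_of_subset P hBm hKm (hHm.union hKm) hS0 subset_union_right]
  exact ⟨max_integral_add_sub_one_le_integral_min _ hX hY hX01 hY01,
    integral_min_le_min_integral _ hX hY⟩

/-- Fréchet–Hoeffding bounds for the prevision of the conjunction of two
conditional events. -/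
theorem frechet_hoeffding_bounds (P : Measure Ω) [IsProbabilityMeasure P]
    (A H B K : Set Ω)
    (hAm : MeasurableSet A) (hHm : MeasurableSet H)
    (hBm : MeasurableSet B) (hKm : MeasurableSet K)
    (hH : 0 < P H) (hK : 0 < P K) :
    max (condProb P A H + condProb P B K - 1) 0 ≤ conjPrev P A H B K ∧
      conjPrev P A H B K ≤ min (condProb P A H) (condProb P B K) :=
  frechet_hoeffding_bounds_general P A H B K hAm hHm hBm hKm hH

end
end

section
/- Key lemma for the Or rule: for events A, B, C with P(A) > 0 and P(B) > 0, the triple conjunction satisfies T3(ω) = ⟦(C|A)∧(C|B)⟧(ω) for every ω ∈ Ω; in particular t equals the prevision z of ⟦(C|A)∧(C|B)⟧. -/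
open MeasureTheory Set
open scoped Classical

noncomputable section

variable {Ω : Type*} [MeasurableSpace Ω]

/-- Or rule: `min(⟦C|(A∪B)⟧, ⟦C|A⟧, ⟦C|B⟧)`. -/
def orMin (P : Measure Ω) (A B C : Set Ω) : Ω → ℝ :=
  fun ω => min (condEvent P C (A ∪ B) ω) (min (condEvent P C A ω) (condEvent P C B ω))

/-- Or rule: the prevision `t = E[min(⟦C|(A∪B)⟧, ⟦C|A⟧, ⟦C|B⟧)·1_{A∪B}]/P(A∪B)`
of the triple conjunction. -/
def orPrev (P : Measure Ω) (A B C : Set Ω) : ℝ :=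
  (∫ ω, orMin P A B C ω * ind (A ∪ B) ω ∂P) / (P (A ∪ B)).toReal

/-- Or rule: the triple conjunction
`T3 = ⟦(C|(A∪B))∧(C|A)∧(C|B)⟧ = min(⟦C|(A∪B)⟧, ⟦C|A⟧, ⟦C|B⟧)·1_{A∪B} + t·1_{(A∪B)ᶜ}`. -/
def orT3 (P : Measure Ω) (A B C : Set Ω) : Ω → ℝ :=
  fun ω => orMin P A B C ω * ind (A ∪ B) ω + orPrev P A B C * ind (A ∪ B)ᶜ ω

/-- Or rule: the iterated conditional
`⟦(C|(A∪B))|((C|A)∧(C|B))⟧ = T3 + (t/z)·(1 − C2)` where `C2 = ⟦(C|A)∧(C|B)⟧`. -/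
def orIter (P : Measure Ω) (A B C : Set Ω) : Ω → ℝ :=
  fun ω => orT3 P A B C ω +
    (orPrev P A B C / conjPrev P C A C B) * (1 - conjCE P C A C B ω)

/-! On `A ∪ B` the factor `⟦C|(A∪B)⟧` never changes the minimum: where `C` holds it is `1`
while `⟦C|A⟧` or `⟦C|B⟧` is already `1`, and where `C` fails it is `0` while one of them is
already `0`. So the integrands defining `t` and `z` agree pointwise, hence so do `t`, `z`
and the two random variables. -/

section

variable {P : Measure Ω} {A B C H : Set Ω} {ω : Ω}

lemma condEvent_eq_one (hA : ω ∈ A) (hH : ω ∈ H) : condEvent P A H ω = 1 := by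
  simp [condEvent, ind, hA, hH]

lemma condEvent_eq_zero (hA : ω ∉ A) (hH : ω ∈ H) : condEvent P A H ω = 0 := by
  simp [condEvent, ind, hA, hH]

lemma condEvent_nonneg : 0 ≤ condEvent P A H ω := by
  have hprob : 0 ≤ condProb P A H := div_nonneg ENNReal.toReal_nonneg ENNReal.toReal_nonneg
  unfold condEvent ind
  by_cases hH : ω ∈ H <;> by_cases hA : ω ∈ A <;> simp [hA, hH, hprob]

lemma orMin_eq_of_mem (h : ω ∈ A ∪ B) :
    orMin P A B C ω = min (condEvent P C A ω) (condEvent P C B ω) := by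
  unfold orMin
  by_cases hC : ω ∈ C
  · refine min_eq_right ?_
    rw [condEvent_eq_one hC h]
    rcases h with hA | hB
    · exact (min_le_left _ _).trans (condEvent_eq_one hC hA).le
    · exact (min_le_right _ _).trans (condEvent_eq_one hC hB).le
  · have hmin : min (condEvent P C A ω) (condEvent P C B ω) = 0 := by
      rcases h with hA | hB
      · rw [condEvent_eq_zero hC hA, min_eq_left condEvent_nonneg]
      · rw [condEvent_eq_zero hC hB, min_eq_right condEvent_nonneg]
    rw [condEvent_eq_zero hC h, hmin, min_self]

variable (P A B C)

lemma orMin_mul_ind (ω : Ω) : orMin P A B C ω * ind (A ∪ B) ω =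
    min (condEvent P C A ω) (condEvent P C B ω) * ind (A ∪ B) ω := by
  by_cases h : ω ∈ A ∪ B
  · rw [orMin_eq_of_mem h]
  · simp [ind, h]

lemma orPrev_eq_conjPrev : orPrev P A B C = conjPrev P C A C B := by
  simp only [orPrev, conjPrev, orMin_mul_ind]

lemma orT3_eq_conjCE (ω : Ω) : orT3 P A B C ω = conjCE P C A C B ω := by
  rw [orT3, conjCE, orMin_mul_ind, orPrev_eq_conjPrev]

end

theorem or_rule_key_lemma_general (P : Measure Ω)
    (A B C : Set Ω) :
    (∀ ω, orT3 P A B C ω = conjCE P C A C B ω) ∧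
      orPrev P A B C = conjPrev P C A C B :=
  ⟨orT3_eq_conjCE P A B C, orPrev_eq_conjPrev P A B C⟩

/-- Key lemma for the Or rule: the triple conjunction
`T3 = ⟦(C|(A∪B))∧(C|A)∧(C|B)⟧` coincides pointwise with the conjunction
`⟦(C|A)∧(C|B)⟧`; in particular `t = z`. -/
theorem or_rule_key_lemma (P : Measure Ω) [IsProbabilityMeasure P]
    (A B C : Set Ω)
    (hAm : MeasurableSet A) (hBm : MeasurableSet B) (hCm : MeasurableSet C)
    (hA : 0 < P A) (hB : 0 < P B) :
    (∀ ω, orT3 P A B C ω = conjCE P C A C B ω) ∧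
      orPrev P A B C = conjPrev P C A C B :=
  or_rule_key_lemma_general P A B C

end
end
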